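/- arXiv:2201.08750 — 4 statements merged into one kernel-verified Lean document; each statement's English description precedes it below -/
import Mathlib

section
/- If two systems of functions F and G over a signature σ are equivalent up to dummy arguments (F ∼ G), then for any consistent intervention do(X = x), the restricted systems F_{X=x} and G_{X=x} are also equivalent up to dummy arguments. -/
namespace CausalTeams

attribute [local instance] Classical.propDecidable

/-- A system of functions over a signature: each endogenous variable `V ∈ En` has a set
of parents `PA V` (not containing `V`) and a function computing its value, which depends
only on the values of its parents. -/
structure FuncSystem (Var : Type) (Val : Var → Type) : Type where
  En : Set Var
  PA : Var → Set Var
  pa_ne : ∀ V, V ∉ PA V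
  fn : ∀ V, (∀ W, Val W) → Val V
  dep_only : ∀ V (s t : ∀ W, Val W), (∀ W ∈ PA V, s W = t W) → fn V s = fn V t

variable {Var : Type} {Val : Var → Type}

/-- Assignments of values to the variables. -/
abbrev Assign (Var : Type) (Val : Var → Type) : Type := ∀ V, Val V

/-- An assignment is compatible with a system of functions if each endogenous variable's
value is the one generated by its function. -/
def Compat (s : Assign Var Val) (F : FuncSystem Var Val) : Prop :=
  ∀ V ∈ F.En, s V = F.fn V s

/-- The endogenous variables whose generating function is constant. -/
def Cn (F : FuncSystem Var Val) : Set Var :=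
  {V | V ∈ F.En ∧ ∀ s t : Assign Var Val, F.fn V s = F.fn V t}

/-- The functions for `V` in `F` and `G` are equivalent up to dummy arguments: they agree
whenever their arguments agree on the common parents of `V`. -/
def fnEquiv (F G : FuncSystem Var Val) (V : Var) : Prop :=
  ∀ s t : Assign Var Val,
    (∀ W, W ∈ F.PA V → W ∈ G.PA V → s W = t W) → F.fn V s = G.fn V t

/-- Equivalence of systems of functions up to dummy arguments. -/
def sysEquiv (F G : FuncSystem Var Val) : Prop :=
  F.En \ Cn F = G.En \ Cn G ∧ ∀ V ∈ F.En \ Cn F, fnEquiv F G V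

/-- The edge relation of the causal graph of `F`. -/
def Edge (F : FuncSystem Var Val) (W V : Var) : Prop := V ∈ F.En ∧ W ∈ F.PA V

/-- `F` is recursive: its causal graph is acyclic. -/
def RecursiveSys (F : FuncSystem Var Val) : Prop :=
  ∀ V, ¬ Relation.TransGen (Edge F) V V

/-- The system of functions resulting from the intervention `do(X = x)`: the variables of
`X` are made exogenous; parents and functions of the remaining endogenous variables are kept. -/
def restrictSys (F : FuncSystem Var Val) (X : Finset Var) : FuncSystem Var Val where
  En := F.En \ ↑X
  PA := F.PA
  pa_ne := F.pa_ne
  fn := F.fn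
  dep_only := F.dep_only

section InterveneAssign
variable [DecidableEq Var] [Fintype Var]

/-- One step of recomputation after the intervention `do(X = x)`. -/
noncomputable def stepFn (F : FuncSystem Var Val) (X : Finset Var) (x : Assign Var Val)
    (s : Assign Var Val) : Assign Var Val :=
  fun V => if V ∈ X then x V else if V ∈ F.En then F.fn V s else s V

/-- The result of the intervention `do(X = x)` on the assignment `s`
(for recursive systems, iterating the recomputation step sufficiently many times
reaches the fixed point). -/
noncomputable def interveneAssign (F : FuncSystem Var Val) (X : Finset Var) (x : Assign Var Val)
    (s : Assign Var Val) : Assign Var Val :=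
  (stepFn F X x)^[Fintype.card Var + 1] s

end InterveneAssign

/-- Formulas: equality atoms `V = v`, dependence atoms `=(Xs; Y)`, negation, conjunction,
tensor disjunction, global disjunction, and interventionist counterfactuals
`X = x □→ φ` (the antecedent is a finite set of variables together with the values
imposed on them, read off from an assignment; such antecedents are always consistent). -/
inductive Formula (Var : Type) (Val : Var → Type) : Type where
  | eq : (V : Var) → Val V → Formula Var Val
  | dep : List Var → Var → Formula Var Val
  | neg : Formula Var Val → Formula Var Val
  | and : Formula Var Val → Formula Var Val → Formula Var Val
  | or : Formula Var Val → Formula Var Val → Formula Var Val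
  | gor : Formula Var Val → Formula Var Val → Formula Var Val
  | cf : Finset Var → Assign Var Val → Formula Var Val → Formula Var Val

/-- CO-formulas: no dependence atoms, no global disjunction. -/
def IsCO : Formula Var Val → Prop
  | .eq _ _ => True
  | .dep _ _ => False
  | .neg φ => IsCO φ
  | .and φ ψ => IsCO φ ∧ IsCO ψ
  | .or φ ψ => IsCO φ ∧ IsCO ψ
  | .gor _ _ => False
  | .cf _ _ φ => IsCO φ

/-- COD-formulas: CO plus dependence atoms; negation applies only to CO-formulas. -/
def IsCOD : Formula Var Val → Prop
  | .eq _ _ => True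
  | .dep _ _ => True
  | .neg φ => IsCO φ
  | .and φ ψ => IsCOD φ ∧ IsCOD ψ
  | .or φ ψ => IsCOD φ ∧ IsCOD ψ
  | .gor _ _ => False
  | .cf _ _ φ => IsCOD φ

/-- CO_⤘-formulas: CO plus global disjunction; negation applies only to CO-formulas. -/
def IsCOglobal : Formula Var Val → Prop
  | .eq _ _ => True
  | .dep _ _ => False
  | .neg φ => IsCO φ
  | .and φ ψ => IsCOglobal φ ∧ IsCOglobal ψ
  | .or φ ψ => IsCOglobal φ ∧ IsCOglobal ψ
  | .gor φ ψ => IsCOglobal φ ∧ IsCOglobal ψ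
  | .cf _ _ φ => IsCOglobal φ

/-- Counterfactual-free formulas: no occurrence of `□→`. -/
def CFFree : Formula Var Val → Prop
  | .eq _ _ => True
  | .dep _ _ => True
  | .neg φ => CFFree φ
  | .and φ ψ => CFFree φ ∧ CFFree ψ
  | .or φ ψ => CFFree φ ∧ CFFree ψ
  | .gor φ ψ => CFFree φ ∧ CFFree ψ
  | .cf _ _ _ => False

section Semantics
variable [DecidableEq Var] [Fintype Var]

/-- Causal team semantics: satisfaction of a formula by a team of assignments together
with a system of functions. -/
noncomputable def csat : FuncSystem Var Val → Set (Assign Var Val) → Formula Var Val → Prop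
  | _, T, .eq V v => ∀ s ∈ T, s V = v
  | _, T, .dep Xs Y => ∀ s ∈ T, ∀ t ∈ T, (∀ W ∈ Xs, s W = t W) → s Y = t Y
  | F, T, .neg φ => ∀ s ∈ T, ¬ csat F {s} φ
  | F, T, .and φ ψ => csat F T φ ∧ csat F T ψ
  | F, T, .or φ ψ => ∃ T₁ T₂, T₁ ∪ T₂ = T ∧ csat F T₁ φ ∧ csat F T₂ ψ
  | F, T, .gor φ ψ => csat F T φ ∨ csat F T ψ
  | F, T, .cf X x φ => csat (restrictSys F X) (interveneAssign F X x '' T) φ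

end Semantics

/-- Generalized causal teams: sets of pairs of an assignment and a system of functions. -/
abbrev GCT (Var : Type) (Val : Var → Type) : Type :=
  Set (Assign Var Val × FuncSystem Var Val)

/-- The team component of a generalized causal team. -/
def teamOf (T : GCT Var Val) : Set (Assign Var Val) := Prod.fst '' T

/-- A genuine (recursive) generalized causal team: all pairs are compatible and all
function components are recursive. -/
def IsGCT (T : GCT Var Val) : Prop := ∀ p ∈ T, Compat p.1 p.2 ∧ RecursiveSys p.2

section GSemantics
variable [DecidableEq Var] [Fintype Var]

/-- Pointwise intervention on a generalized causal team. -/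
noncomputable def gIntervene (T : GCT Var Val) (X : Finset Var) (x : Assign Var Val) : GCT Var Val :=
  (fun p => (interveneAssign p.2 X x p.1, restrictSys p.2 X)) '' T

/-- Generalized causal team semantics. -/
noncomputable def gsat : GCT Var Val → Formula Var Val → Prop
  | T, .eq V v => ∀ p ∈ T, p.1 V = v
  | T, .dep Xs Y => ∀ p ∈ T, ∀ q ∈ T, (∀ W ∈ Xs, p.1 W = q.1 W) → p.1 Y = q.1 Y
  | T, .neg φ => ∀ p ∈ T, ¬ gsat {p} φ
  | T, .and φ ψ => gsat T φ ∧ gsat T ψ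
  | T, .or φ ψ => ∃ T₁ T₂, T₁ ∪ T₂ = T ∧ gsat T₁ φ ∧ gsat T₂ ψ
  | T, .gor φ ψ => gsat T φ ∨ gsat T ψ
  | T, .cf X x φ => gsat (gIntervene T X x) φ

end GSemantics

/-- Equivalence of generalized causal teams: for each system of functions `F`, the
assignments occurring together with a function component `∼`-similar to `F` are the same. -/
def gctEquiv (S T : GCT Var Val) : Prop :=
  ∀ F : FuncSystem Var Val,
    {s | ∃ G, (s, G) ∈ S ∧ sysEquiv G F} = {s | ∃ G, (s, G) ∈ T ∧ sysEquiv G F}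

/-- `S ≼ T` iff `S ≈ R ⊆ T` for some `R`. -/
def sle (S T : GCT Var Val) : Prop := ∃ R : GCT Var Val, gctEquiv S R ∧ R ⊆ T

/-- The generalized causal team generated by a causal team. -/
def toGCT (team : Set (Assign Var Val)) (F : FuncSystem Var Val) : GCT Var Val :=
  (fun s => (s, F)) '' team

/-- Equivalence of elements of generalized causal teams: same assignment and
`∼`-similar function components. -/
def pairEquiv (p q : Assign Var Val × FuncSystem Var Val) : Prop :=
  p.1 = q.1 ∧ sysEquiv p.2 q.2

/-- The quotient `T/≈` has at most `k` elements: `T` is covered by `k` representatives. -/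
def quotCardLE (T : GCT Var Val) (k : ℕ) : Prop :=
  ∃ R : Finset (Assign Var Val × FuncSystem Var Val),
    R.card ≤ k ∧ ∀ p ∈ T, ∃ q ∈ R, pairEquiv p q

section Entailment
variable [DecidableEq Var] [Fintype Var]

/-- Entailment over (recursive) generalized causal teams. -/
def gEntails (Δ : Set (Formula Var Val)) (α : Formula Var Val) : Prop :=
  ∀ T : GCT Var Val, IsGCT T → (∀ γ ∈ Δ, gsat T γ) → gsat T α

/-- Entailment over (recursive) causal teams. -/
def cEntails (Δ : Set (Formula Var Val)) (α : Formula Var Val) : Prop :=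
  ∀ (F : FuncSystem Var Val) (team : Set (Assign Var Val)),
    RecursiveSys F → (∀ s ∈ team, Compat s F) →
    (∀ γ ∈ Δ, csat F team γ) → csat F team α

/-- Causal incompatibility of two formulas. -/
def Incompatible (φ ψ : Formula Var Val) : Prop :=
  ∀ (F G : FuncSystem Var Val) (S T : Set (Assign Var Val)),
    S.Nonempty → T.Nonempty → RecursiveSys F → RecursiveSys G →
    (∀ s ∈ S, Compat s F) → (∀ t ∈ T, Compat t G) →
    csat F S φ → csat G T ψ → ¬ sysEquiv F G

end Entailment

section FormulaHelpers
variable [DecidableEq Var] [Fintype Var] [Nonempty Var]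
  [∀ V, Fintype (Val V)] [∀ V, Nonempty (Val V)]

/-- The falsum formula `⊥ := V = v ∧ V ≠ v`. -/
noncomputable def falsum : Formula Var Val :=
  let V := Classical.arbitrary Var
  Formula.and (Formula.eq V (Classical.arbitrary (Val V)))
    (Formula.neg (Formula.eq V (Classical.arbitrary (Val V))))

/-- Finite conjunction (the empty conjunction is `¬⊥`). -/
noncomputable def bigAnd : List (Formula Var Val) → Formula Var Val
  | [] => Formula.neg falsum
  | [φ] => φ
  | φ :: l => Formula.and φ (bigAnd l)

/-- Finite tensor disjunction (the empty disjunction is `⊥`). -/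
noncomputable def bigOr : List (Formula Var Val) → Formula Var Val
  | [] => falsum
  | [φ] => φ
  | φ :: l => Formula.or φ (bigOr l)

/-- Finite global disjunction (the empty disjunction is `⊥`). -/
noncomputable def bigGor : List (Formula Var Val) → Formula Var Val
  | [] => falsum
  | [φ] => φ
  | φ :: l => Formula.gor φ (bigGor l)

/-- The conjunction `⋀_{V ∈ Dom} V = s(V)` describing the assignment `s`. -/
noncomputable def eqConj (s : Assign Var Val) : Formula Var Val :=
  bigAnd ((Finset.univ : Finset Var).toList.map fun V => Formula.eq V (s V))

/-- `Θ^A := ⋁_{s ∈ A} ⋀_{V ∈ Dom} V = s(V)`. -/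
noncomputable def Theta (A : Finset (Assign Var Val)) : Formula Var Val :=
  bigOr (A.toList.map eqConj)

/-- The constancy atom `=(V)`. -/
def conAtom (V : Var) : Formula Var Val := Formula.dep [] V

/-- `μ := ⋀_{V ∈ Dom} ⋀_{w} (W_V = w □→ =(V))` where `W_V = Dom \ {V}`. -/
noncomputable def muForm : Formula Var Val :=
  bigAnd ((Finset.univ : Finset Var).toList.map fun V =>
    bigAnd (((Finset.univ : Finset (Assign Var Val))).toList.map fun w =>
      Formula.cf ((Finset.univ : Finset Var).erase V) w (conAtom V)))

/-- `χ := μ ∧ ⋀_{V ∈ Dom} =(V)`. -/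
noncomputable def chiForm : Formula Var Val :=
  Formula.and muForm (bigAnd ((Finset.univ : Finset Var).toList.map conAtom))

/-- `χ_k`: the `k`-fold tensor disjunction of `χ` (with `χ_0 := ⊥`). -/
noncomputable def chiK : ℕ → Formula Var Val
  | 0 => falsum
  | 1 => chiForm
  | n + 2 => Formula.or chiForm (chiK (n + 1))

end FormulaHelpers

/-- if F ∼ G, then for any consistent intervention do(X = x) the
restricted systems F_X and G_X are also equivalent up to dummy arguments. -/
theorem sysEquiv_restrict {Var : Type} [Fintype Var] [DecidableEq Var] [Nonempty Var]
    {Val : Var → Type} [∀ V, Fintype (Val V)] [∀ V, Nonempty (Val V)]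
    (F G : FuncSystem Var Val) (X : Finset Var) (x : Assign Var Val)
    (h : sysEquiv F G) :
    sysEquiv (restrictSys F X) (restrictSys G X) := by
  obtain ⟨hEn, hfn⟩ := h
  have key : ∀ H : FuncSystem Var Val,
      (restrictSys H X).En \ Cn (restrictSys H X) = (H.En \ Cn H) \ ↑X := by
    intro H
    ext V
    simp only [restrictSys, Cn, Set.mem_diff, Set.mem_setOf_eq]
    constructor
    · rintro ⟨⟨hV, hX⟩, hnc⟩
      exact ⟨⟨hV, fun hc => hnc ⟨⟨hV, hX⟩, hc.2⟩⟩, hX⟩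
    · rintro ⟨⟨hV, hnc⟩, hX⟩
      exact ⟨⟨hV, hX⟩, fun hc => hnc ⟨hV, hc.2⟩⟩
  constructor
  · rw [key F, key G, hEn]
  · intro V hV
    rw [key F] at hV
    exact hfn V hV.1

end CausalTeams
end

section
/- Invariance under causal equivalence: if T and S are generalized causal teams with T ≈ S, then for any formula φ of CO, CO_⤘ (CO with global disjunction), or COD (CO with dependence atoms), T ⊨ φ if and only if S ⊨ φ. -/
namespace CausalTeams

attribute [local instance] Classical.propDecidable

variable {Var : Type} {Val : Var → Type}

/-!
Every clause of the generalized semantics inspects only the assignments of a team, and each of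
them survives when a function component is replaced by a `∼`-equivalent one, except for the
counterfactual clause. For it, the point is that `∼`-equivalent systems compute the same
intervention on an assignment compatible with both: they can differ only on endogenous
variables with constant functions, and compatibility pins those to the values of the
assignment itself. Interventions on recursive systems reach a fixed point, so they preserve
compatibility, and a structural induction over formulas goes through; for the tensor
disjunction, a split of one team is transported to the other by pairing equivalent elements.
-/

theorem fnEquiv_refl (F : FuncSystem Var Val) (V : Var) : fnEquiv F F V :=
  fun s t h => F.dep_only V s t fun W hW => h W hW hW

theorem fnEquiv.symm {F G : FuncSystem Var Val} {V : Var} (h : fnEquiv F G V) :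
    fnEquiv G F V :=
  fun s t hst => (h t s fun W hF hG => (hst W hG hF).symm).symm

theorem fnEquiv.trans {F G H : FuncSystem Var Val} {V : Var} (h₁ : fnEquiv F G V)
    (h₂ : fnEquiv G H V) : fnEquiv F H V := by
  intro s t hst
  let r : Assign Var Val := fun W => if W ∈ F.PA V then s W else t W
  calc F.fn V s = F.fn V r := F.dep_only V s r fun W hW => by simp [r, hW]
    _ = G.fn V r := h₁ r r fun _ _ _ => rfl
    _ = H.fn V t := h₂ r t fun W _ hWH => by
      by_cases hWF : W ∈ F.PA V
      · simpa [r, hWF] using hst W hWF hWH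
      · simp [r, hWF]

theorem sysEquiv_refl (F : FuncSystem Var Val) : sysEquiv F F :=
  ⟨rfl, fun V _ => fnEquiv_refl F V⟩

theorem sysEquiv.symm {F G : FuncSystem Var Val} (h : sysEquiv F G) : sysEquiv G F :=
  ⟨h.1.symm, fun V hV => (h.2 V (h.1 ▸ hV)).symm⟩

theorem sysEquiv.trans {F G H : FuncSystem Var Val} (h₁ : sysEquiv F G)
    (h₂ : sysEquiv G H) : sysEquiv F H :=
  ⟨h₁.1.trans h₂.1, fun V hV => (h₁.2 V hV).trans (h₂.2 V (h₁.1 ▸ hV))⟩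

theorem restrictSys_En_diff_Cn (F : FuncSystem Var Val) (X : Finset Var) :
    (restrictSys F X).En \ Cn (restrictSys F X) = (F.En \ Cn F) \ ↑X := by
  ext V
  simp only [restrictSys, Cn, Set.mem_sdiff, Set.mem_ofPred_eq]
  tauto

theorem sysEquiv.restrictSys {F G : FuncSystem Var Val} (h : sysEquiv F G) (X : Finset Var) :
    sysEquiv (restrictSys F X) (restrictSys G X) := by
  refine ⟨by rw [restrictSys_En_diff_Cn, restrictSys_En_diff_Cn, h.1], fun V hV => ?_⟩
  rw [restrictSys_En_diff_Cn] at hV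
  exact h.2 V hV.1

theorem RecursiveSys.restrictSys {F : FuncSystem Var Val} (hF : RecursiveSys F)
    (X : Finset Var) : RecursiveSys (restrictSys F X) :=
  fun V hV => hF V (Relation.TransGen.mono (fun _ _ hWV => ⟨hWV.1.1, hWV.2⟩) V V hV)

/-- Decreases along the edges of a recursive system, so after `rank F V + 1` recomputation
steps the value of `V` is final. -/
noncomputable def rank (F : FuncSystem Var Val) (V : Var) : ℕ :=
  Set.ncard {W | Relation.TransGen (Edge F) W V}

theorem rank_lt_of_edge [Finite Var] {F : FuncSystem Var Val} (hF : RecursiveSys F) {W V : Var}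
    (h : Edge F W V) : rank F W < rank F V :=
  Set.ncard_lt_ncard ⟨fun _ hU => hU.tail h, fun hsub => hF W (hsub (.single h))⟩
    (Set.toFinite _)

theorem rank_le_card [Fintype Var] (F : FuncSystem Var Val) (V : Var) :
    rank F V ≤ Fintype.card Var :=
  (Set.ncard_le_card _).trans_eq Nat.card_eq_fintype_card

section Intervention

variable [DecidableEq Var]

theorem iterate_succ_stepFn_apply (F : FuncSystem Var Val) (X : Finset Var)
    (x s : Assign Var Val) (n : ℕ) (V : Var) :
    (stepFn F X x)^[n + 1] s V = if V ∈ X then x V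
      else if V ∈ F.En then F.fn V ((stepFn F X x)^[n] s) else (stepFn F X x)^[n] s V := by
  rw [Function.iterate_succ_apply']
  rfl

theorem iterate_stepFn_apply_of_exogenous (F : FuncSystem Var Val) (X : Finset Var)
    (x s : Assign Var Val) {V : Var} (hX : V ∉ X) (hEn : V ∉ F.En) (n : ℕ) :
    (stepFn F X x)^[n] s V = s V := by
  induction n with
  | zero => rfl
  | succ n ih => rw [iterate_succ_stepFn_apply, if_neg hX, if_neg hEn, ih]

theorem stepFn_apply_of_compat {F : FuncSystem Var Val} {X : Finset Var} {x s u : Assign Var Val}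
    (hs : Compat s F) (hu : ∀ V ∉ X, V ∉ F.En → u V = s V) {V : Var} (hX : V ∉ X) :
    stepFn F X x u V = if V ∈ F.En \ Cn F then F.fn V u else s V := by
  simp only [stepFn, if_neg hX, Set.mem_sdiff]
  by_cases hEn : V ∈ F.En
  · by_cases hCn : V ∈ Cn F
    -- Compatibility pins a constant function to the value it has at `s`.
    · rw [if_pos hEn, if_neg fun h => h.2 hCn, hs V hEn]
      exact hCn.2 u s
    · rw [if_pos hEn, if_pos ⟨hEn, hCn⟩]
  · rw [if_neg hEn, if_neg fun h => hEn h.1, hu V hX hEn]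

theorem iterate_stepFn_eq_of_sysEquiv {F G : FuncSystem Var Val} (h : sysEquiv F G)
    {s : Assign Var Val} (hsF : Compat s F) (hsG : Compat s G) (X : Finset Var)
    (x : Assign Var Val) (n : ℕ) : (stepFn F X x)^[n] s = (stepFn G X x)^[n] s := by
  induction n with
  | zero => rfl
  | succ n ih =>
    rw [Function.iterate_succ_apply', Function.iterate_succ_apply', ih]
    funext V
    by_cases hX : V ∈ X
    · simp [stepFn, hX]
    rw [stepFn_apply_of_compat hsF (fun _ hW hEn => ih ▸ iterate_stepFn_apply_of_exogenous
        F X x s hW hEn n) hX,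
      stepFn_apply_of_compat hsG (fun _ hW hEn => iterate_stepFn_apply_of_exogenous
        G X x s hW hEn n) hX]
    by_cases hV : V ∈ F.En \ Cn F
    · rw [if_pos hV, if_pos (h.1 ▸ hV)]
      exact h.2 V hV _ _ fun _ _ _ => rfl
    · rw [if_neg hV, if_neg (h.1 ▸ hV)]

variable [Fintype Var]

theorem iterate_succ_stepFn_apply_eq {F : FuncSystem Var Val} (hF : RecursiveSys F)
    (X : Finset Var) (x s : Assign Var Val) (n : ℕ) :
    ∀ V, rank F V < n → (stepFn F X x)^[n + 1] s V = (stepFn F X x)^[n] s V := by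
  induction n with
  | zero => exact fun V hV => absurd hV (Nat.not_lt_zero _)
  | succ n ih =>
    intro V hV
    rw [iterate_succ_stepFn_apply, iterate_succ_stepFn_apply]
    split_ifs with hX hEn
    · rfl
    · exact F.dep_only V _ _ fun W hW =>
        ih W ((rank_lt_of_edge hF ⟨hEn, hW⟩).trans_le (Nat.lt_succ_iff.1 hV))
    · rfl

theorem stepFn_interveneAssign {F : FuncSystem Var Val} (hF : RecursiveSys F) (X : Finset Var)
    (x s : Assign Var Val) :
    stepFn F X x (interveneAssign F X x s) = interveneAssign F X x s := by
  funext V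
  rw [interveneAssign, ← Function.iterate_succ_apply' (stepFn F X x)]
  exact iterate_succ_stepFn_apply_eq hF X x s _ V (Nat.lt_succ_of_le (rank_le_card F V))

theorem compat_interveneAssign {F : FuncSystem Var Val} (hF : RecursiveSys F) (X : Finset Var)
    (x s : Assign Var Val) : Compat (interveneAssign F X x s) (restrictSys F X) := by
  rintro V ⟨hEn, hX⟩
  have hfix := congrFun (stepFn_interveneAssign hF X x s) V
  rw [Finset.mem_coe] at hX
  simp only [stepFn, if_neg hX, if_pos hEn] at hfix
  exact hfix.symm

theorem interveneAssign_eq_of_sysEquiv {F G : FuncSystem Var Val} (h : sysEquiv F G)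
    {s : Assign Var Val} (hsF : Compat s F) (hsG : Compat s G) (X : Finset Var)
    (x : Assign Var Val) : interveneAssign F X x s = interveneAssign G X x s :=
  iterate_stepFn_eq_of_sysEquiv h hsF hsG X x _

end Intervention

theorem pairEquiv.symm {p q : Assign Var Val × FuncSystem Var Val} (h : pairEquiv p q) :
    pairEquiv q p :=
  ⟨h.1.symm, h.2.symm⟩

theorem gctEquiv.symm {T S : GCT Var Val} (h : gctEquiv T S) : gctEquiv S T :=
  fun F => (h F).symm

theorem gctEquiv.exists_pairEquiv {T S : GCT Var Val} (h : gctEquiv T S)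
    {p : Assign Var Val × FuncSystem Var Val} (hp : p ∈ T) : ∃ q ∈ S, pairEquiv q p := by
  have hmem : p.1 ∈ {s | ∃ G, (s, G) ∈ T ∧ sysEquiv G p.2} := ⟨p.2, hp, sysEquiv_refl p.2⟩
  obtain ⟨G, hG, hGp⟩ := h p.2 ▸ hmem
  exact ⟨(p.1, G), hG, rfl, hGp⟩

theorem gctEquiv_of_exists_pairEquiv {T S : GCT Var Val}
    (hTS : ∀ p ∈ T, ∃ q ∈ S, pairEquiv q p) (hST : ∀ q ∈ S, ∃ p ∈ T, pairEquiv p q) :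
    gctEquiv T S := by
  have key : ∀ {T S : GCT Var Val}, (∀ p ∈ T, ∃ q ∈ S, pairEquiv q p) → ∀ F,
      {s | ∃ G, (s, G) ∈ T ∧ sysEquiv G F} ⊆ {s | ∃ G, (s, G) ∈ S ∧ sysEquiv G F} := by
    rintro T S hTS F s ⟨G, hG, hGF⟩
    obtain ⟨⟨_, G'⟩, hq, rfl, hG'G⟩ := hTS _ hG
    exact ⟨G', hq, hG'G.trans hGF⟩
  exact fun F => (key hTS F).antisymm (key hST F)

theorem gctEquiv_singleton {p q : Assign Var Val × FuncSystem Var Val} (h : pairEquiv p q) :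
    gctEquiv {p} {q} :=
  gctEquiv_of_exists_pairEquiv (by simpa using h.symm) (by simpa using h)

theorem IsGCT.mono {T S : GCT Var Val} (hS : IsGCT S) (hTS : T ⊆ S) : IsGCT T :=
  fun p hp => hS p (hTS hp)

def pairedPart (S T : GCT Var Val) : GCT Var Val := {q ∈ S | ∃ p ∈ T, pairEquiv q p}

theorem pairedPart_union (S T₁ T₂ : GCT Var Val) :
    pairedPart S (T₁ ∪ T₂) = pairedPart S T₁ ∪ pairedPart S T₂ := by
  ext q
  simp only [pairedPart, Set.mem_union, Set.mem_ofPred_eq, exists_or, and_or_left,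
    or_and_right]

theorem gctEquiv.pairedPart_eq {T S : GCT Var Val} (h : gctEquiv T S) : pairedPart S T = S :=
  (Set.sep_subset _ _).antisymm fun _ hq =>
    let ⟨p, hp, hpq⟩ := h.symm.exists_pairEquiv hq
    ⟨hq, p, hp, hpq.symm⟩

theorem gctEquiv.pairedPart {T S T' : GCT Var Val} (h : gctEquiv T S) (hT' : T' ⊆ T) :
    gctEquiv T' (pairedPart S T') := by
  refine gctEquiv_of_exists_pairEquiv (fun p hp => ?_) fun _ ⟨_, p, hp, hqp⟩ => ⟨p, hp, hqp.symm⟩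
  obtain ⟨q, hq, hqp⟩ := h.exists_pairEquiv (hT' hp)
  exact ⟨q, ⟨hq, p, hp, hqp⟩, hqp⟩

section GeneralizedSemantics

variable [DecidableEq Var] [Fintype Var]

theorem IsGCT.gIntervene {T : GCT Var Val} (hT : IsGCT T) (X : Finset Var)
    (x : Assign Var Val) : IsGCT (gIntervene T X x) := by
  rintro _ ⟨p, hp, rfl⟩
  exact ⟨compat_interveneAssign (hT p hp).2 X x p.1, (hT p hp).2.restrictSys X⟩

theorem exists_pairEquiv_gIntervene {T S : GCT Var Val} (hT : IsGCT T) (hS : IsGCT S)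
    (h : gctEquiv T S) {X : Finset Var} {x : Assign Var Val}
    {p : Assign Var Val × FuncSystem Var Val} (hp : p ∈ gIntervene T X x) :
    ∃ q ∈ gIntervene S X x, pairEquiv q p := by
  obtain ⟨p, hp, rfl⟩ := hp
  obtain ⟨q, hq, hqp⟩ := h.exists_pairEquiv hp
  refine ⟨_, ⟨q, hq, rfl⟩, ?_, hqp.2.restrictSys X⟩
  dsimp only
  rw [hqp.1, interveneAssign_eq_of_sysEquiv hqp.2 (hqp.1 ▸ (hS q hq).1) (hT p hp).1]

theorem gctEquiv.gIntervene {T S : GCT Var Val} (hT : IsGCT T) (hS : IsGCT S)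
    (h : gctEquiv T S) (X : Finset Var) (x : Assign Var Val) :
    gctEquiv (gIntervene T X x) (gIntervene S X x) :=
  gctEquiv_of_exists_pairEquiv (fun _ => exists_pairEquiv_gIntervene hT hS h)
    fun _ => exists_pairEquiv_gIntervene hS hT h.symm

theorem gsat_of_gctEquiv (φ : Formula Var Val) :
    ∀ {T S : GCT Var Val}, IsGCT T → IsGCT S → gctEquiv T S → gsat T φ → gsat S φ := by
  induction φ with
  | eq V v =>
    intro T S _ _ h hsat p hp
    obtain ⟨q, hq, hqp⟩ := h.symm.exists_pairEquiv hp
    exact hqp.1 ▸ hsat q hq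
  | dep Xs Y =>
    intro T S _ _ h hsat p hp p' hp' hagree
    obtain ⟨q, hq, hqp⟩ := h.symm.exists_pairEquiv hp
    obtain ⟨q', hq', hqp'⟩ := h.symm.exists_pairEquiv hp'
    rw [← hqp.1, ← hqp'.1] at hagree ⊢
    exact hsat q hq q' hq' hagree
  | neg ψ ih =>
    intro T S hT hS h hsat p hp hp_sat
    obtain ⟨q, hq, hqp⟩ := h.symm.exists_pairEquiv hp
    exact hsat q hq (ih (hS.mono (Set.singleton_subset_iff.2 hp))
      (hT.mono (Set.singleton_subset_iff.2 hq)) (gctEquiv_singleton hqp.symm) hp_sat)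
  | and ψ χ ihψ ihχ =>
    intro T S hT hS h ⟨hψ, hχ⟩
    exact ⟨ihψ hT hS h hψ, ihχ hT hS h hχ⟩
  | or ψ χ ihψ ihχ =>
    rintro T S hT hS h ⟨T₁, T₂, rfl, hψ, hχ⟩
    refine ⟨pairedPart S T₁, pairedPart S T₂, by rw [← pairedPart_union, h.pairedPart_eq], ?_, ?_⟩
    · exact ihψ (hT.mono Set.subset_union_left) (hS.mono (Set.sep_subset _ _))
        (h.pairedPart Set.subset_union_left) hψ
    · exact ihχ (hT.mono Set.subset_union_right) (hS.mono (Set.sep_subset _ _))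
        (h.pairedPart Set.subset_union_right) hχ
  | gor ψ χ ihψ ihχ =>
    intro T S hT hS h
    exact Or.imp (ihψ hT hS h) (ihχ hT hS h)
  | cf X x ψ ih =>
    intro T S hT hS h
    exact ih (hT.gIntervene X x) (hS.gIntervene X x) (h.gIntervene hT hS X x)

end GeneralizedSemantics

theorem invariance_under_equivalence_general {Var : Type} [Fintype Var] [DecidableEq Var]
    {Val : Var → Type}
    (T S : GCT Var Val) (hT : IsGCT T) (hS : IsGCT S) (heq : gctEquiv T S)
    (φ : Formula Var Val) :
    gsat T φ ↔ gsat S φ :=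
  ⟨gsat_of_gctEquiv φ hT hS heq, gsat_of_gctEquiv φ hS hT heq.symm⟩

/-- invariance under causal equivalence: equivalent generalized causal
teams (T ≈ S) satisfy the same formulas of CO, CO with global disjunction, and COD. -/
theorem invariance_under_equivalence {Var : Type} [Fintype Var] [DecidableEq Var] [Nonempty Var]
    {Val : Var → Type} [∀ V, Fintype (Val V)] [∀ V, Nonempty (Val V)]
    (T S : GCT Var Val) (hT : IsGCT T) (hS : IsGCT S) (heq : gctEquiv T S)
    (φ : Formula Var Val) (hφ : IsCOD φ ∨ IsCOglobal φ) :
    gsat T φ ↔ gsat S φ :=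
  invariance_under_equivalence_general T S hT hS heq φ

end CausalTeams
end

section
/- For any set Δ ∪ {α} of CO-formulas, Δ entails α over all (recursive) generalized causal teams if and only if Δ entails α over all (recursive) causal teams. -/
namespace CausalTeams

attribute [local instance] Classical.propDecidable

variable {Var : Type} {Val : Var → Type}

section Aux
variable {Var : Type} {Val : Var → Type} [Fintype Var] [DecidableEq Var]

lemma csat_empty (F : FuncSystem Var Val) (φ : Formula Var Val) (h : IsCO φ) :
    csat F ∅ φ := by
  induction φ generalizing F with
  | eq V v => intro s hs; exact hs.elim
  | dep => exact h.elim
  | neg φ ih => intro s hs; exact hs.elim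
  | and φ ψ ihφ ihψ => exact ⟨ihφ _ h.1, ihψ _ h.2⟩
  | or φ ψ ihφ ihψ => exact ⟨∅, ∅, by simp, ihφ _ h.1, ihψ _ h.2⟩
  | gor => exact h.elim
  | cf X x φ ih => show csat _ _ φ; rw [Set.image_empty]; exact ih _ h

lemma gsat_empty (φ : Formula Var Val) (h : IsCO φ) : gsat (∅ : GCT Var Val) φ := by
  induction φ with
  | eq V v => intro p hp; exact hp.elim
  | dep => exact h.elim
  | neg φ ih => intro p hp; exact hp.elim
  | and φ ψ ihφ ihψ => exact ⟨ihφ h.1, ihψ h.2⟩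
  | or φ ψ ihφ ihψ => exact ⟨∅, ∅, by simp, ihφ h.1, ihψ h.2⟩
  | gor => exact h.elim
  | cf X x φ ih =>
      show gsat (gIntervene ∅ X x) φ
      rw [show gIntervene (∅ : GCT Var Val) X x = ∅ from Set.image_empty _]
      exact ih h

lemma csat_or_singleton (F : FuncSystem Var Val) (s : Assign Var Val)
    {φ ψ : Formula Var Val} (hφ : IsCO φ) (hψ : IsCO ψ) :
    csat F {s} (.or φ ψ) ↔ csat F {s} φ ∨ csat F {s} ψ := by
  constructor
  · rintro ⟨T₁, T₂, hu, h1, h2⟩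
    have hs : s ∈ T₁ ∪ T₂ := hu ▸ rfl
    rcases hs with hs | hs
    · left
      have : T₁ = {s} := le_antisymm (hu ▸ Set.subset_union_left) (by simpa using hs)
      rwa [this] at h1
    · right
      have : T₂ = {s} := le_antisymm (hu ▸ Set.subset_union_right) (by simpa using hs)
      rwa [this] at h2
  · rintro (h | h)
    · exact ⟨{s}, ∅, by simp, h, csat_empty F ψ hψ⟩
    · exact ⟨∅, {s}, by simp, csat_empty F φ hφ, h⟩

lemma gsat_or_singleton (p : Assign Var Val × FuncSystem Var Val)
    {φ ψ : Formula Var Val} (hφ : IsCO φ) (hψ : IsCO ψ) :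
    gsat {p} (.or φ ψ) ↔ gsat {p} φ ∨ gsat {p} ψ := by
  constructor
  · rintro ⟨T₁, T₂, hu, h1, h2⟩
    have hs : p ∈ T₁ ∪ T₂ := hu ▸ rfl
    rcases hs with hs | hs
    · left
      have : T₁ = {p} := le_antisymm (hu ▸ Set.subset_union_left) (by simpa using hs)
      rwa [this] at h1
    · right
      have : T₂ = {p} := le_antisymm (hu ▸ Set.subset_union_right) (by simpa using hs)
      rwa [this] at h2
  · rintro (h | h)
    · exact ⟨{p}, ∅, by simp, h, gsat_empty ψ hψ⟩
    · exact ⟨∅, {p}, by simp, gsat_empty φ hφ, h⟩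

lemma csat_flat (φ : Formula Var Val) (h : IsCO φ) (F : FuncSystem Var Val)
    (T : Set (Assign Var Val)) :
    csat F T φ ↔ ∀ s ∈ T, csat F {s} φ := by
  induction φ generalizing F T with
  | eq V v =>
      show (∀ s ∈ T, s V = v) ↔ _
      simp [csat]
  | dep => exact h.elim
  | neg φ ih =>
      show (∀ s ∈ T, ¬ csat F {s} φ) ↔ _
      constructor
      · intro hT s hs t ht
        rcases ht with rfl
        exact hT _ hs
      · intro hT s hs
        exact hT s hs s rfl
  | and φ ψ ihφ ihψ =>
      show csat F T φ ∧ csat F T ψ ↔ _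
      rw [ihφ h.1, ihψ h.2]
      constructor
      · intro hT s hs; exact ⟨hT.1 s hs, hT.2 s hs⟩
      · intro hT; exact ⟨fun s hs => (hT s hs).1, fun s hs => (hT s hs).2⟩
  | or φ ψ ihφ ihψ =>
      constructor
      · rintro ⟨T₁, T₂, hu, h1, h2⟩ s hs
        rw [csat_or_singleton F s h.1 h.2]
        rw [← hu] at hs
        rcases hs with hs | hs
        · exact Or.inl ((ihφ h.1 F T₁).mp h1 s hs)
        · exact Or.inr ((ihψ h.2 F T₂).mp h2 s hs)
      · intro hT
        refine ⟨{s ∈ T | csat F {s} φ}, {s ∈ T | csat F {s} ψ}, ?_, ?_, ?_⟩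
        · apply le_antisymm
          · rintro s (⟨hs, _⟩ | ⟨hs, _⟩) <;> exact hs
          · intro s hs
            rcases (csat_or_singleton F s h.1 h.2).mp (hT s hs) with h' | h'
            · exact Or.inl ⟨hs, h'⟩
            · exact Or.inr ⟨hs, h'⟩
        · exact (ihφ h.1 F _).mpr fun s hs => hs.2
        · exact (ihψ h.2 F _).mpr fun s hs => hs.2
  | gor => exact h.elim
  | cf X x φ ih =>
      show csat (restrictSys F X) (interveneAssign F X x '' T) φ ↔ _
      rw [ih h (restrictSys F X)]
      constructor
      · intro hT s hs
        show csat (restrictSys F X) (interveneAssign F X x '' {s}) φ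
        rw [Set.image_singleton]
        exact hT _ ⟨s, hs, rfl⟩
      · rintro hT t ⟨s, hs, rfl⟩
        have := hT s hs
        show csat (restrictSys F X) {interveneAssign F X x s} φ
        rw [← Set.image_singleton (f := interveneAssign F X x)]
        exact this

lemma gsat_flat (φ : Formula Var Val) (h : IsCO φ) (T : GCT Var Val) :
    gsat T φ ↔ ∀ p ∈ T, gsat {p} φ := by
  induction φ generalizing T with
  | eq V v =>
      show (∀ p ∈ T, p.1 V = v) ↔ _
      simp [gsat]
  | dep => exact h.elim
  | neg φ ih =>
      show (∀ p ∈ T, ¬ gsat {p} φ) ↔ _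
      constructor
      · intro hT p hp q hq
        rcases hq with rfl
        exact hT _ hp
      · intro hT p hp
        exact hT p hp p rfl
  | and φ ψ ihφ ihψ =>
      show gsat T φ ∧ gsat T ψ ↔ _
      rw [ihφ h.1, ihψ h.2]
      constructor
      · intro hT p hp; exact ⟨hT.1 p hp, hT.2 p hp⟩
      · intro hT; exact ⟨fun p hp => (hT p hp).1, fun p hp => (hT p hp).2⟩
  | or φ ψ ihφ ihψ =>
      constructor
      · rintro ⟨T₁, T₂, hu, h1, h2⟩ p hp
        rw [gsat_or_singleton p h.1 h.2]
        rw [← hu] at hp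
        rcases hp with hp | hp
        · exact Or.inl ((ihφ h.1 T₁).mp h1 p hp)
        · exact Or.inr ((ihψ h.2 T₂).mp h2 p hp)
      · intro hT
        refine ⟨{p ∈ T | gsat {p} φ}, {p ∈ T | gsat {p} ψ}, ?_, ?_, ?_⟩
        · apply le_antisymm
          · rintro p (⟨hp, _⟩ | ⟨hp, _⟩) <;> exact hp
          · intro p hp
            rcases (gsat_or_singleton p h.1 h.2).mp (hT p hp) with h' | h'
            · exact Or.inl ⟨hp, h'⟩
            · exact Or.inr ⟨hp, h'⟩
        · exact (ihφ h.1 _).mpr fun p hp => hp.2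
        · exact (ihψ h.2 _).mpr fun p hp => hp.2
  | gor => exact h.elim
  | cf X x φ ih =>
      show gsat (gIntervene T X x) φ ↔ _
      rw [ih h]
      constructor
      · intro hT p hp
        show gsat (gIntervene {p} X x) φ
        rw [show gIntervene {p} X x = {(interveneAssign p.2 X x p.1, restrictSys p.2 X)}
          from Set.image_singleton]
        exact hT _ ⟨p, hp, rfl⟩
      · rintro hT q ⟨p, hp, rfl⟩
        have h1 : gsat (gIntervene {p} X x) φ := hT p hp
        rw [show gIntervene {p} X x = {(interveneAssign p.2 X x p.1, restrictSys p.2 X)}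
          from Set.image_singleton] at h1
        exact h1

lemma sat_corr (φ : Formula Var Val) (h : IsCO φ) (F : FuncSystem Var Val)
    (s : Assign Var Val) : gsat {(s, F)} φ ↔ csat F {s} φ := by
  induction φ generalizing F s with
  | eq V v =>
      show (∀ p ∈ ({(s, F)} : GCT Var Val), p.1 V = v) ↔ (∀ t ∈ ({s} : Set _), t V = v)
      simp
  | dep => exact h.elim
  | neg φ ih =>
      show (∀ p ∈ ({(s, F)} : GCT Var Val), ¬ gsat {p} φ) ↔
        (∀ t ∈ ({s} : Set _), ¬ csat F {t} φ)
      constructor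
      · rintro hT t rfl
        rw [← ih h]
        exact hT _ rfl
      · rintro hT p rfl
        rw [ih h]
        exact hT _ rfl
  | and φ ψ ihφ ihψ =>
      show gsat _ φ ∧ gsat _ ψ ↔ csat _ _ φ ∧ csat _ _ ψ
      rw [ihφ h.1, ihψ h.2]
  | or φ ψ ihφ ihψ =>
      rw [gsat_or_singleton _ h.1 h.2, csat_or_singleton F s h.1 h.2, ihφ h.1, ihψ h.2]
  | gor => exact h.elim
  | cf X x φ ih =>
      show gsat (gIntervene {(s, F)} X x) φ ↔
        csat (restrictSys F X) (interveneAssign F X x '' {s}) φ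
      rw [show gIntervene {(s, F)} X x = {(interveneAssign F X x s, restrictSys F X)}
        from Set.image_singleton, Set.image_singleton]
      exact ih h _ _

end Aux

/-- for sets of CO-formulas, entailment over (recursive) generalized
causal teams coincides with entailment over (recursive) causal teams. -/
theorem co_entailment_transfer {Var : Type} [Fintype Var] [DecidableEq Var] [Nonempty Var]
    {Val : Var → Type} [∀ V, Fintype (Val V)] [∀ V, Nonempty (Val V)]
    (Δ : Set (Formula Var Val)) (α : Formula Var Val)
    (hΔ : ∀ γ ∈ Δ, IsCO γ) (hα : IsCO α) :
    gEntails Δ α ↔ cEntails Δ α := by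
  constructor
  · intro hg F team hrec hcomp hsat
    have key : ∀ γ, IsCO γ → (gsat (toGCT team F) γ ↔ csat F team γ) := by
      intro γ hγ
      rw [gsat_flat γ hγ, csat_flat γ hγ]
      constructor
      · intro h s hs
        exact (sat_corr γ hγ F s).mp (h (s, F) ⟨s, hs, rfl⟩)
      · rintro h p ⟨s, hs, rfl⟩
        exact (sat_corr γ hγ F s).mpr (h s hs)
    have hT : IsGCT (toGCT team F) := by
      rintro p ⟨s, hs, rfl⟩
      exact ⟨hcomp s hs, hrec⟩
    exact (key α hα).mp (hg _ hT fun γ hγ => (key γ (hΔ γ hγ)).mpr (hsat γ hγ))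
  · intro hc T hT hsat
    rw [gsat_flat α hα]
    rintro ⟨s, F⟩ hp
    rw [sat_corr α hα]
    apply hc F {s} (hT _ hp).2
    · rintro t rfl
      exact (hT _ hp).1
    · intro γ hγ
      rw [← sat_corr γ (hΔ γ hγ)]
      exact (gsat_flat γ (hΔ γ hγ) T).mp (hsat γ hγ) _ hp


end CausalTeams
end

section
/- Disjunction property for global disjunction over generalized causal teams: if Δ is a set of CO-formulas and φ, ψ are arbitrary formulas, and Δ ⊨^g φ ⤘ ψ, then Δ ⊨^g φ or Δ ⊨^g ψ. -/
namespace CausalTeams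

attribute [local instance] Classical.propDecidable

variable {Var : Type} {Val : Var → Type}

/-! Take a counterexample team for each disjunct. Their union is still a generalized causal team
and, CO-formulas being flat, still satisfies `Δ`; so it satisfies `φ` or `ψ`, and by downward
closure so does the corresponding counterexample. -/

section Flatness
variable [Fintype Var] [DecidableEq Var]

theorem gsat_of_subset (γ : Formula Var Val) {S T : GCT Var Val} (hST : S ⊆ T)
    (hT : gsat T γ) : gsat S γ := by
  induction γ generalizing S T with
  | eq V v => exact fun p hp => hT p (hST hp)
  | dep Xs Y => exact fun p hp q hq => hT p (hST hp) q (hST hq)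
  | neg φ _ => exact fun p hp => hT p (hST hp)
  | and φ ψ ihφ ihψ => exact ⟨ihφ hST hT.1, ihψ hST hT.2⟩
  | or φ ψ ihφ ihψ =>
    obtain ⟨T₁, T₂, hT₁₂, hφ, hψ⟩ := hT
    refine ⟨T₁ ∩ S, T₂ ∩ S, ?_, ihφ Set.inter_subset_left hφ, ihψ Set.inter_subset_left hψ⟩
    rw [← Set.union_inter_distrib_right, hT₁₂, Set.inter_eq_self_of_subset_right hST]
  | gor φ ψ ihφ ihψ => exact hT.imp (ihφ hST) (ihψ hST)
  | cf X x φ ih => exact ih (Set.image_mono hST) hT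

theorem gsat_singleton_or {p : Assign Var Val × FuncSystem Var Val} {φ ψ : Formula Var Val}
    (h : gsat {p} (.or φ ψ)) : gsat {p} φ ∨ gsat {p} ψ := by
  obtain ⟨T₁, T₂, hT₁₂, hφ, hψ⟩ := h
  have hp : p ∈ T₁ ∪ T₂ := hT₁₂ ▸ rfl
  exact hp.imp (fun hp₁ => gsat_of_subset φ (Set.singleton_subset_iff.mpr hp₁) hφ)
    (fun hp₂ => gsat_of_subset ψ (Set.singleton_subset_iff.mpr hp₂) hψ)

theorem IsCO.gsat_iff_forall_singleton {γ : Formula Var Val} (hγ : IsCO γ) (T : GCT Var Val) :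
    gsat T γ ↔ ∀ p ∈ T, gsat {p} γ := by
  induction γ generalizing T with
  | eq V v => simp only [gsat, Set.mem_singleton_iff, forall_eq]
  | neg φ _ => simp only [gsat, Set.mem_singleton_iff, forall_eq]
  | and φ ψ ihφ ihψ =>
    show gsat T φ ∧ gsat T ψ ↔ ∀ p ∈ T, gsat {p} φ ∧ gsat {p} ψ
    rw [ihφ hγ.1, ihψ hγ.2, forall₂_and]
  | or φ ψ ihφ ihψ =>
    refine ⟨fun h p hp => gsat_of_subset _ (Set.singleton_subset_iff.mpr hp) h, fun h => ?_⟩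
    -- Split `T` into the points satisfying `φ` and the rest, which must satisfy `ψ`.
    refine ⟨T ∩ {p | gsat {p} φ}, T \ {p | gsat {p} φ}, Set.inter_union_sdiff T _,
      (ihφ hγ.1 _).mpr fun p hp => hp.2, (ihψ hγ.2 _).mpr fun p hp => ?_⟩
    exact (gsat_singleton_or (h p hp.1)).resolve_left hp.2
  | cf X x φ ih =>
    show gsat (gIntervene T X x) φ ↔ ∀ p ∈ T, gsat (gIntervene {p} X x) φ
    rw [ih hγ]
    simp only [gIntervene, Set.image_singleton, Set.forall_mem_image]
  | dep | gor => exact hγ.elim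

theorem IsCO.gsat_union {γ : Formula Var Val} (hγ : IsCO γ) {S T : GCT Var Val}
    (hS : gsat S γ) (hT : gsat T γ) : gsat (S ∪ T) γ := by
  rw [hγ.gsat_iff_forall_singleton] at hS hT ⊢
  exact fun p hp => hp.elim (hS p) (hT p)

end Flatness

theorem IsGCT.union {S T : GCT Var Val} (hS : IsGCT S) (hT : IsGCT T) : IsGCT (S ∪ T) :=
  fun p hp => hp.elim (hS p) (hT p)

theorem disjunction_property_general {Var : Type} [Fintype Var] [DecidableEq Var]
    {Val : Var → Type}
    (Δ : Set (Formula Var Val)) (hΔ : ∀ γ ∈ Δ, IsCO γ)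
    (φ ψ : Formula Var Val) :
    gEntails Δ (Formula.gor φ ψ) → gEntails Δ φ ∨ gEntails Δ ψ := by
  intro h
  by_contra! hne
  obtain ⟨T₁, hT₁, hΔ₁, hφ₁⟩ : ∃ T, IsGCT T ∧ (∀ γ ∈ Δ, gsat T γ) ∧ ¬ gsat T φ := by
    simpa [gEntails] using hne.1
  obtain ⟨T₂, hT₂, hΔ₂, hψ₂⟩ : ∃ T, IsGCT T ∧ (∀ γ ∈ Δ, gsat T γ) ∧ ¬ gsat T ψ := by
    simpa [gEntails] using hne.2
  rcases h (T₁ ∪ T₂) (hT₁.union hT₂) fun γ hγ => (hΔ γ hγ).gsat_union (hΔ₁ γ hγ) (hΔ₂ γ hγ)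
    with hφ | hψ
  · exact hφ₁ (gsat_of_subset φ Set.subset_union_left hφ)
  · exact hψ₂ (gsat_of_subset ψ Set.subset_union_right hψ)

/-- disjunction property for global disjunction over generalized causal
teams: if a set of CO-formulas entails φ ⤘ ψ, then it entails φ or it entails ψ. -/
theorem disjunction_property {Var : Type} [Fintype Var] [DecidableEq Var] [Nonempty Var]
    {Val : Var → Type} [∀ V, Fintype (Val V)] [∀ V, Nonempty (Val V)]
    (Δ : Set (Formula Var Val)) (hΔ : ∀ γ ∈ Δ, IsCO γ)
    (φ ψ : Formula Var Val)
    (hφ : IsCOD φ ∨ IsCOglobal φ) (hψ : IsCOD ψ ∨ IsCOglobal ψ) :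
    gEntails Δ (Formula.gor φ ψ) → gEntails Δ φ ∨ gEntails Δ ψ :=
  disjunction_property_general Δ hΔ φ ψ

end CausalTeams
end
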